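/- arXiv:1210.4812 — 4 statements merged into one kernel-verified Lean document; each statement's English description precedes it below -/
import Mathlib

section
/- Let X be a real inner product space and let u, v ∈ X be nonzero vectors with angle ∠(u,v) ≤ α for some 0 < α < π. Then the Gromov product (u|v)_0 = (‖u‖ + ‖v‖ - ‖u - v‖)/2 satisfies (u|v)_0 ≥ k·min(‖u‖, ‖v‖), where k = k(α) > 0 depends only on α; in fact one may take k = (1/2)(2 - √(2 - 2cos α)). -/
open InnerProductGeometry

/-!
Say `‖u‖ ≤ ‖v‖` and let `w` be `v` rescaled to length `‖u‖`. By the law of cosines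
`‖u - w‖ = ‖u‖ √(2 - 2 cos ∠(u,v)) ≤ ‖u‖ √(2 - 2 cos α)`, and `‖w - v‖ = ‖v‖ - ‖u‖`, so the
triangle inequality through `w` gives `‖u - v‖ ≤ ‖v‖ - ‖u‖ + ‖u‖ √(2 - 2 cos α)`, which is the
claimed bound. The constant is positive because `cos α > -1` for `0 ≤ α < π`.
-/

namespace InnerProductGeometry

variable {X : Type*} [NormedAddCommGroup X] [InnerProductSpace ℝ X] {α : ℝ}

theorem sqrt_two_sub_two_mul_cos_lt_two (hα0 : 0 ≤ α) (hαπ : α < Real.pi) :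
    Real.sqrt (2 - 2 * Real.cos α) < 2 := by
  have hcos : -1 < Real.cos α := by
    simpa [Real.cos_pi] using Real.cos_lt_cos_of_nonneg_of_le_pi hα0 le_rfl hαπ
  rw [Real.sqrt_lt' two_pos]
  linarith

theorem norm_sub_le_of_norm_eq_of_angle_le {u w : X} (hnorm : ‖u‖ = ‖w‖)
    (hangle : angle u w ≤ α) (hαπ : α ≤ Real.pi) :
    ‖u - w‖ ≤ ‖u‖ * Real.sqrt (2 - 2 * Real.cos α) := by
  have hcos : Real.cos α ≤ Real.cos (angle u w) :=
    Real.cos_le_cos_of_nonneg_of_le_pi (angle_nonneg u w) hαπ hangle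
  rw [← Real.sqrt_sq (norm_nonneg u), ← Real.sqrt_mul (sq_nonneg _),
    Real.le_sqrt (norm_nonneg _) (by nlinarith [Real.cos_le_one α]), sq, sq,
    norm_sub_sq_eq_norm_sq_add_norm_sq_sub_two_mul_norm_mul_norm_mul_cos_angle, ← hnorm]
  nlinarith [mul_self_nonneg ‖u‖]

theorem norm_sub_le_of_norm_le_of_angle_le {u v : X} (huv : ‖u‖ ≤ ‖v‖)
    (hangle : angle u v ≤ α) (hαπ : α ≤ Real.pi) :
    ‖u - v‖ ≤ ‖v‖ - ‖u‖ + ‖u‖ * Real.sqrt (2 - 2 * Real.cos α) := by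
  rcases (norm_nonneg u).eq_or_lt with hu | hu
  · simp [norm_eq_zero.mp hu.symm]
  set r := ‖u‖ / ‖v‖
  have hv : 0 < ‖v‖ := hu.trans_le huv
  have hr : 0 < r := div_pos hu hv
  have hw : ‖r • v‖ = ‖u‖ := by
    rw [norm_smul, Real.norm_of_nonneg hr.le, div_mul_cancel₀ _ hv.ne']
  have hwv : ‖r • v - v‖ = ‖v‖ - ‖u‖ := by
    have hr1 : r ≤ 1 := (div_le_one hv).mpr huv
    rw [show r • v - v = (r - 1) • v by rw [sub_smul, one_smul], norm_smul,
      Real.norm_of_nonpos (by linarith), neg_sub, sub_mul, one_mul, div_mul_cancel₀ _ hv.ne']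
  calc ‖u - v‖ ≤ ‖u - r • v‖ + ‖r • v - v‖ := norm_sub_le_norm_sub_add_norm_sub _ _ _
    _ ≤ ‖u‖ * Real.sqrt (2 - 2 * Real.cos α) + (‖v‖ - ‖u‖) := by
      rw [hwv]
      gcongr
      exact norm_sub_le_of_norm_eq_of_angle_le hw.symm
        ((angle_smul_right_of_pos u v hr).trans_le hangle) hαπ
    _ = _ := by ring

end InnerProductGeometry

theorem stmt_0_general {X : Type*} [NormedAddCommGroup X] [InnerProductSpace ℝ X]
    (u v : X) (α : ℝ) (hαπ : α < Real.pi)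
    (hangle : InnerProductGeometry.angle u v ≤ α) :
    0 < (1 / 2) * (2 - Real.sqrt (2 - 2 * Real.cos α)) ∧
    (1 / 2) * (2 - Real.sqrt (2 - 2 * Real.cos α)) * min ‖u‖ ‖v‖ ≤
      (‖u‖ + ‖v‖ - ‖u - v‖) / 2 := by
  have hk := sqrt_two_sub_two_mul_cos_lt_two ((angle_nonneg u v).trans hangle) hαπ
  refine ⟨by linarith, ?_⟩
  rcases le_total ‖u‖ ‖v‖ with huv | hvu
  · have := norm_sub_le_of_norm_le_of_angle_le huv hangle hαπ.le
    rw [min_eq_left huv]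
    linarith
  · have := norm_sub_le_of_norm_le_of_angle_le hvu (by rwa [angle_comm]) hαπ.le
    rw [min_eq_right hvu, norm_sub_rev]
    linarith

/-- Angle lemma: if the angle between nonzero vectors `u, v` is at most `α < π`,
then the Gromov product `(u|v)_0 = (‖u‖ + ‖v‖ - ‖u - v‖)/2` is at least
`k(α) · min(‖u‖, ‖v‖)` with `k(α) = (1/2)(2 - √(2 - 2 cos α)) > 0`. -/
theorem stmt_0 {X : Type*} [NormedAddCommGroup X] [InnerProductSpace ℝ X]
    (u v : X) (hu : u ≠ 0) (hv : v ≠ 0) (α : ℝ) (hα0 : 0 < α) (hαπ : α < Real.pi)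
    (hangle : InnerProductGeometry.angle u v ≤ α) :
    0 < (1 / 2) * (2 - Real.sqrt (2 - 2 * Real.cos α)) ∧
    (1 / 2) * (2 - Real.sqrt (2 - 2 * Real.cos α)) * min ‖u‖ ‖v‖ ≤
      (‖u‖ + ‖v‖ - ‖u - v‖) / 2 :=
  stmt_0_general u v α hαπ hangle
end

section
/- Let X be a real inner product space and let a_t = (cos t)·e₁ + (sin t)·e₂ for orthonormal vectors e₁, e₂ and t ∈ ℝ. If s, t ∈ ℝ are such that |t - s| is not an odd multiple of π, then the Gromov sequences x^t = (n·a_t)_{n∈ℕ} and x^s = (n·a_s)_{n∈ℕ} satisfy (x^t, x^s) ∈ E, i.e. (m·a_t | n·a_s)_0 → ∞ as m,n → ∞. -/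
open Filter RealInnerProductSpace

private lemma key_ineq (m n c : ℝ) (hm : 0 ≤ m) (hn : 0 ≤ n) (hc1 : c ≤ 1)
    (hc2 : -1 ≤ c) :
    min m n * ((1 + c) / 4) ≤ (m + n - Real.sqrt (m ^ 2 + n ^ 2 - 2 * m * n * c)) / 2 := by
  set r : ℝ := min m n * ((1 + c) / 2) with hr
  have hmin0 : 0 ≤ min m n := le_min hm hn
  have hr0 : 0 ≤ r := by
    apply mul_nonneg hmin0; linarith
  have hminm : min m n ≤ m := min_le_left _ _
  have hminn : min m n ≤ n := min_le_right _ _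
  have hrle : r ≤ m + n := by nlinarith
  have hsq : m ^ 2 + n ^ 2 - 2 * m * n * c ≤ (m + n - r) ^ 2 := by
    rcases le_total m n with h | h
    · have hminm' : min m n = m := min_eq_left h
      rw [hr, hminm']
      nlinarith [mul_nonneg (mul_nonneg (mul_nonneg (sub_nonneg.2 h) hm)
        (by linarith : (0:ℝ) ≤ 1 + c)) (by linarith : (0:ℝ) ≤ 1 - c),
        sq_nonneg (m * (1 + c)), mul_nonneg (mul_nonneg (sub_nonneg.2 h) hm)
        (by linarith : (0:ℝ) ≤ 1 + c)]
    · have hminn' : min m n = n := min_eq_right h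
      rw [hr, hminn']
      nlinarith [mul_nonneg (mul_nonneg (mul_nonneg (sub_nonneg.2 h) hn)
        (by linarith : (0:ℝ) ≤ 1 + c)) (by linarith : (0:ℝ) ≤ 1 - c),
        sq_nonneg (n * (1 + c)), mul_nonneg (mul_nonneg (sub_nonneg.2 h) hn)
        (by linarith : (0:ℝ) ≤ 1 + c)]
  have hsqrt : Real.sqrt (m ^ 2 + n ^ 2 - 2 * m * n * c) ≤ m + n - r := by
    calc Real.sqrt (m ^ 2 + n ^ 2 - 2 * m * n * c) ≤ Real.sqrt ((m + n - r) ^ 2) :=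
          Real.sqrt_le_sqrt hsq
      _ = m + n - r := Real.sqrt_sq (by linarith)
  linarith

/-- Let `a t = (cos t)·e₁ + (sin t)·e₂` for orthonormal `e₁, e₂`. If `|t - s|` is not an
odd multiple of `π`, then the Gromov sequences `(n·a_t)` and `(n·a_s)` satisfy
`(x^t, x^s) ∈ E`, i.e. `(m·a_t | n·a_s)_0 → ∞` as `m, n → ∞`. -/
theorem stmt_4 {X : Type*} [NormedAddCommGroup X] [InnerProductSpace ℝ X]
    (e₁ e₂ : X) (he₁ : ‖e₁‖ = 1) (he₂ : ‖e₂‖ = 1) (horth : ⟪e₁, e₂⟫ = 0)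
    (t s : ℝ) (hts : ¬∃ k : ℤ, |t - s| = (2 * k + 1) * Real.pi) :
    Tendsto
      (fun p : ℕ × ℕ =>
        (‖(p.1 : ℝ) • (Real.cos t • e₁ + Real.sin t • e₂)‖ +
         ‖(p.2 : ℝ) • (Real.cos s • e₁ + Real.sin s • e₂)‖ -
         ‖(p.1 : ℝ) • (Real.cos t • e₁ + Real.sin t • e₂) -
          (p.2 : ℝ) • (Real.cos s • e₁ + Real.sin s • e₂)‖) / 2)
      atTop atTop := by
  set a : X := Real.cos t • e₁ + Real.sin t • e₂ with ha_def
  set b : X := Real.cos s • e₁ + Real.sin s • e₂ with hb_def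
  set c : ℝ := Real.cos (t - s) with hc_def
  have hc1 : c ≤ 1 := Real.cos_le_one _
  have hc2 : -1 ≤ c := Real.neg_one_le_cos _
  have hcne : c ≠ -1 := by
    intro h
    rcases Real.cos_eq_neg_one_iff.mp h with ⟨k, hk⟩
    rcases abs_choice (t - s) with habs | habs
    · exact hts ⟨k, by rw [habs, ← hk]; ring⟩
    · exact hts ⟨-k - 1, by rw [habs, ← hk]; push_cast; ring⟩
  have hcgt : -1 < c := lt_of_le_of_ne hc2 (Ne.symm hcne)
  have h11 : ⟪e₁, e₁⟫ = 1 := by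
    rw [real_inner_self_eq_norm_sq, he₁]; norm_num
  have h22 : ⟪e₂, e₂⟫ = 1 := by
    rw [real_inner_self_eq_norm_sq, he₂]; norm_num
  have h21 : ⟪e₂, e₁⟫ = 0 := by rw [real_inner_comm]; exact horth
  have hna : ‖a‖ = 1 := by
    have : ‖a‖ ^ 2 = 1 := by
      rw [← real_inner_self_eq_norm_sq, ha_def]
      simp only [inner_add_left, inner_add_right, real_inner_smul_left,
        real_inner_smul_right, h11, h22, h21, horth]
      ring_nf
      nlinarith [Real.sin_sq_add_cos_sq t]
    nlinarith [norm_nonneg a]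
  have hnb : ‖b‖ = 1 := by
    have : ‖b‖ ^ 2 = 1 := by
      rw [← real_inner_self_eq_norm_sq, hb_def]
      simp only [inner_add_left, inner_add_right, real_inner_smul_left,
        real_inner_smul_right, h11, h22, h21, horth]
      ring_nf
      nlinarith [Real.sin_sq_add_cos_sq s]
    nlinarith [norm_nonneg b]
  have hab : ⟪a, b⟫ = c := by
    rw [ha_def, hb_def, hc_def, Real.cos_sub]
    simp only [inner_add_left, inner_add_right, real_inner_smul_left,
      real_inner_smul_right, h11, h22, h21, horth]
    ring
  have hdist : ∀ m n : ℕ, ‖(m : ℝ) • a - (n : ℝ) • b‖ =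
      Real.sqrt ((m : ℝ) ^ 2 + (n : ℝ) ^ 2 - 2 * m * n * c) := by
    intro m n
    have hsq : ‖(m : ℝ) • a - (n : ℝ) • b‖ ^ 2 =
        (m : ℝ) ^ 2 + (n : ℝ) ^ 2 - 2 * m * n * c := by
      rw [@norm_sub_sq_real]
      rw [real_inner_smul_left, real_inner_smul_right, hab]
      rw [norm_smul, norm_smul, hna, hnb]
      simp [Real.norm_natCast]
      ring
    rw [← hsq, Real.sqrt_sq (norm_nonneg _)]
  have hnorm : ∀ (m : ℕ) (v : X), ‖v‖ = 1 → ‖(m : ℝ) • v‖ = m := by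
    intro m v hv
    rw [norm_smul, hv, mul_one, Real.norm_natCast]
  have hC : (0 : ℝ) < (1 + c) / 4 := by linarith
  have hmin : Tendsto (fun p : ℕ × ℕ => min (p.1 : ℝ) (p.2 : ℝ)) atTop atTop := by
    rw [tendsto_atTop]
    intro B
    filter_upwards [Filter.eventually_ge_atTop ((⌈B⌉₊, ⌈B⌉₊) : ℕ × ℕ)] with p hp
    obtain ⟨h1, h2⟩ := hp
    have hB : B ≤ (⌈B⌉₊ : ℝ) := Nat.le_ceil B
    exact le_min (hB.trans (by exact_mod_cast h1)) (hB.trans (by exact_mod_cast h2))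
  have hmain := hmin.atTop_mul_const hC
  apply tendsto_atTop_mono _ hmain
  intro p
  rw [hnorm p.1 a hna, hnorm p.2 b hnb, hdist p.1 p.2]
  exact key_ineq _ _ c (Nat.cast_nonneg _) (Nat.cast_nonneg _) hc1 hc2
end

section
/- Let X be a real Hilbert space of dimension at least 2 and fix basepoint 0. Then any two Gromov sequences in X are equivalent under the transitive closure of the relation E; equivalently, the Gromov boundary of X is a singleton. -/
open Filter

/-- The Gromov product of `x` and `y` with basepoint `o` in a metric space. -/
noncomputable def gromovProd {α : Type*} [MetricSpace α] (o x y : α) : ℝ :=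
  (dist x o + dist y o - dist x y) / 2

/-- `x` is a Gromov sequence with basepoint `o`. -/
def IsGromovSeq {α : Type*} [MetricSpace α] (o : α) (x : ℕ → α) : Prop :=
  Tendsto (fun p : ℕ × ℕ => gromovProd o (x p.1) (x p.2)) atTop atTop

/-- The relation `E` on Gromov sequences. -/
def GromovRel {α : Type*} [MetricSpace α] (o : α) (x y : ℕ → α) : Prop :=
  Tendsto (fun p : ℕ × ℕ => gromovProd o (x p.1) (y p.2)) atTop atTop

/-! In a real inner product space the Gromov product based at `0` satisfies
`(f|g)₀ (‖f‖ + ‖g‖ + ‖f - g‖) = ‖f‖‖g‖ + ⟪f, g⟫`, so `(f|g)₀ ≥ ε min ‖f‖ ‖g‖ / 4` as soon as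
`⟪f, g⟫ ≥ (ε - 1)‖f‖‖g‖`, i.e. as soon as the angle between `f` and `g` stays away from `π`.
Thus sequences with norms tending to infinity and no asymptotically opposite directions are
`E`-related. A Gromov sequence `x` is related in this way to the ray `k ↦ k • x N` once
`(x m | x N)₀ ≥ 1` for `m ≥ N`, and two rays are related when their directions are non-obtuse.
In dimension at least `2` there is a direction `w` orthogonal to the ray of `x` and, after a change
of sign, non-obtuse to the ray of `y`; it links the two rays, hence `x` and `y`. -/

open scoped RealInnerProductSpace

section MetricSpace

variable {α : Type*} [MetricSpace α]

lemma gromovProd_comm (o x y : α) :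
    gromovProd o x y = gromovProd o y x := by
  simp only [gromovProd, dist_comm x y, add_comm]

lemma gromovProd_self (o x : α) : gromovProd o x x = dist x o := by
  simp [gromovProd]

lemma gromovProd_nonneg (o x y : α) : 0 ≤ gromovProd o x y := by
  rw [gromovProd]
  linarith [dist_triangle_right x y o]

lemma GromovRel.symm {o : α} {x y : ℕ → α}
    (h : GromovRel o x y) : GromovRel o y x := by
  have hswap : Tendsto (Prod.swap : ℕ × ℕ → ℕ × ℕ) atTop atTop :=
    tendsto_atTop_atTop_of_monotone (fun _ _ h => ⟨h.2, h.1⟩) fun p => ⟨p.swap, le_rfl⟩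
  simpa only [GromovRel, Function.comp_def, Prod.fst_swap, Prod.snd_swap, gromovProd_comm o (x _)]
    using h.comp hswap

lemma IsGromovSeq.tendsto_dist {o : α} {x : ℕ → α} (hx : IsGromovSeq o x) :
    Tendsto (fun n => dist (x n) o) atTop atTop := by
  simpa only [Function.comp_def, gromovProd_self] using hx.comp tendsto_atTop_diagonal

end MetricSpace

lemma IsGromovSeq.tendsto_norm {E : Type*} [NormedAddCommGroup E] {x : ℕ → E}
    (hx : IsGromovSeq 0 x) : Tendsto (fun n => ‖x n‖) atTop atTop := by
  simpa only [dist_zero_right] using hx.tendsto_dist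

section InnerProductSpace

variable {X : Type*} [NormedAddCommGroup X] [InnerProductSpace ℝ X]

lemma gromovProd_zero_mul (f g : X) :
    gromovProd 0 f g * (‖f‖ + ‖g‖ + ‖f - g‖) = ‖f‖ * ‖g‖ + ⟪f, g⟫ := by
  have h := norm_sub_sq_real f g
  simp only [gromovProd, dist_eq_norm, sub_zero]
  linear_combination (-1/2 : ℝ) * h

lemma min_norm_le_gromovProd_zero {f g : X} {ε : ℝ} (hε : 0 ≤ ε)
    (h : ε * (‖f‖ * ‖g‖) ≤ ‖f‖ * ‖g‖ + ⟪f, g⟫) :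
    ε * min ‖f‖ ‖g‖ / 4 ≤ gromovProd 0 f g := by
  have hkey := gromovProd_zero_mul f g
  have hgp := gromovProd_nonneg 0 f g
  have hsub : ‖f - g‖ ≤ ‖f‖ + ‖g‖ := norm_sub_le f g
  have hmin : min ‖f‖ ‖g‖ * (‖f‖ + ‖g‖) ≤ 2 * (‖f‖ * ‖g‖) := by
    rcases min_cases ‖f‖ ‖g‖ with ⟨hm, _⟩ | ⟨hm, _⟩ <;> rw [hm] <;>
      nlinarith [norm_nonneg f, norm_nonneg g]
  rcases (add_nonneg (norm_nonneg f) (norm_nonneg g)).eq_or_lt with hzero | hpos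
  · have hmin0 : min ‖f‖ ‖g‖ ≤ 0 := (min_le_left _ _).trans (by linarith [norm_nonneg g])
    linarith [mul_nonpos_of_nonneg_of_nonpos hε hmin0]
  · rw [div_le_iff₀ (by norm_num : (0 : ℝ) < 4)]
    refine le_of_mul_le_mul_right ?_ hpos
    calc ε * min ‖f‖ ‖g‖ * (‖f‖ + ‖g‖) ≤ ε * (2 * (‖f‖ * ‖g‖)) := by
          rw [mul_assoc]; exact mul_le_mul_of_nonneg_left hmin hε
      _ ≤ 2 * (gromovProd 0 f g * (‖f‖ + ‖g‖ + ‖f - g‖)) := by rw [hkey]; linarith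
      _ ≤ gromovProd 0 f g * 4 * (‖f‖ + ‖g‖) := by nlinarith

lemma gromovRel_zero_of_inner_ge {f g : ℕ → X} {ε : ℝ} (hε : 0 < ε)
    (hf : Tendsto (fun n => ‖f n‖) atTop atTop) (hg : Tendsto (fun n => ‖g n‖) atTop atTop)
    (h : ∀ᶠ p : ℕ × ℕ in atTop,
      ε * (‖f p.1‖ * ‖g p.2‖) ≤ ‖f p.1‖ * ‖g p.2‖ + ⟪f p.1, g p.2⟫) :
    GromovRel 0 f g := by
  rw [GromovRel, ← prod_atTop_atTop_eq]
  rw [← prod_atTop_atTop_eq] at h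
  refine tendsto_atTop.2 fun C => ?_
  filter_upwards [h, (hf.eventually_ge_atTop (4 * C / ε)).prod_mk
    (hg.eventually_ge_atTop (4 * C / ε))] with p hp ⟨hfC, hgC⟩
  calc C = ε * (4 * C / ε) / 4 := by field_simp
    _ ≤ ε * min ‖f p.1‖ ‖g p.2‖ / 4 := by gcongr; exact le_min hfC hgC
    _ ≤ _ := min_norm_le_gromovProd_zero hε.le hp

def ray (v : X) : ℕ → X := fun k => (k : ℝ) • v

lemma tendsto_norm_ray {v : X} (hv : v ≠ 0) : Tendsto (fun k => ‖ray v k‖) atTop atTop := by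
  simp only [ray, norm_smul, Real.norm_natCast]
  exact tendsto_natCast_atTop_atTop.atTop_mul_const (norm_pos_iff.2 hv)

lemma gromovRel_ray_ray {v w : X} (hv : v ≠ 0) (hw : w ≠ 0) (hvw : 0 ≤ ⟪v, w⟫) :
    GromovRel 0 (ray v) (ray w) := by
  refine gromovRel_zero_of_inner_ge one_pos (tendsto_norm_ray hv) (tendsto_norm_ray hw)
    (Eventually.of_forall fun p => ?_)
  have : 0 ≤ ⟪ray v p.1, ray w p.2⟫ := by
    simp only [ray, real_inner_smul_left, real_inner_smul_right]
    positivity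
  linarith

lemma IsGromovSeq.exists_gromovRel_ray {x : ℕ → X} (hx : IsGromovSeq 0 x) :
    ∃ v ≠ 0, GromovRel 0 x (ray v) := by
  obtain ⟨⟨N₁, N₂⟩, hN⟩ := eventually_atTop.1 (hx.eventually_ge_atTop 1)
  set N := max N₁ N₂
  have hgp : ∀ m ≥ N, 1 ≤ gromovProd 0 (x m) (x N) := fun m hm =>
    hN (m, N) ⟨(le_max_left _ _).trans hm, le_max_right _ _⟩
  have hxN : 1 ≤ ‖x N‖ := by simpa [gromovProd_self] using hgp N le_rfl
  have hxN0 : x N ≠ 0 := norm_pos_iff.1 (by linarith)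
  refine ⟨x N, hxN0, gromovRel_zero_of_inner_ge (ε := ‖x N‖⁻¹) (by positivity)
    hx.tendsto_norm (tendsto_norm_ray hxN0) ?_⟩
  have hm : ∀ᶠ p : ℕ × ℕ in atTop, N ≤ p.1 := by
    rw [← prod_atTop_atTop_eq]; exact tendsto_fst.eventually_ge_atTop N
  filter_upwards [hm] with ⟨m, k⟩ (hmN : N ≤ m)
  have hcone : ‖x m‖ ≤ ‖x m‖ * ‖x N‖ + ⟪x m, x N⟫ := by
    calc ‖x m‖ ≤ 1 * (‖x m‖ + ‖x N‖ + ‖x m - x N‖) := by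
          linarith [norm_nonneg (x N), norm_nonneg (x m - x N)]
      _ ≤ gromovProd 0 (x m) (x N) * (‖x m‖ + ‖x N‖ + ‖x m - x N‖) :=
        mul_le_mul_of_nonneg_right (hgp m hmN) (by positivity)
      _ = _ := gromovProd_zero_mul _ _
  simp only [ray, norm_smul, Real.norm_natCast, real_inner_smul_right]
  have hk : (0 : ℝ) ≤ k := Nat.cast_nonneg k
  calc ‖x N‖⁻¹ * (‖x m‖ * (k * ‖x N‖)) = k * ‖x m‖ := by field_simp
    _ ≤ k * (‖x m‖ * ‖x N‖ + ⟪x m, x N⟫) := mul_le_mul_of_nonneg_left hcone hk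
    _ = _ := by ring

lemma exists_ne_zero_inner_eq_zero (hdim : 2 ≤ Module.rank ℝ X) (v : X) :
    ∃ u ≠ 0, ⟪v, u⟫ = 0 := by
  have hspan : (ℝ ∙ v) ≠ ⊤ := fun htop => by
    have : Module.rank ℝ X ≤ 1 := by
      simpa [(LinearEquiv.ofTop _ htop).rank_eq] using rank_span_le (R := ℝ) ({v} : Set X)
    exact absurd (hdim.trans this) (by norm_num)
  obtain ⟨u, hu, hu0⟩ := Submodule.ne_bot_iff _ |>.1 (Submodule.orthogonal_eq_bot_iff.not.2 hspan)
  exact ⟨u, hu0, Submodule.mem_orthogonal_singleton_iff_inner_right.1 hu⟩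

lemma exists_ne_zero_inner_nonneg (hdim : 2 ≤ Module.rank ℝ X) (v v' : X) :
    ∃ w ≠ 0, 0 ≤ ⟪v, w⟫ ∧ 0 ≤ ⟪v', w⟫ := by
  obtain ⟨u, hu0, hvu⟩ := exists_ne_zero_inner_eq_zero hdim v
  rcases le_total 0 ⟪v', u⟫ with h | h
  · exact ⟨u, hu0, hvu.ge, h⟩
  · exact ⟨-u, neg_ne_zero.2 hu0, by simp [hvu], by simpa [inner_neg_right] using h⟩

end InnerProductSpace

theorem stmt_5_general {X : Type*} [NormedAddCommGroup X] [InnerProductSpace ℝ X]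
    (hdim : 2 ≤ Module.rank ℝ X)
    (x y : ℕ → X) (hx : IsGromovSeq (0 : X) x) (hy : IsGromovSeq (0 : X) y) :
    Relation.TransGen (GromovRel (0 : X)) x y := by
  obtain ⟨v, hv, hxv⟩ := hx.exists_gromovRel_ray
  obtain ⟨v', hv', hyv'⟩ := hy.exists_gromovRel_ray
  obtain ⟨w, hw, hvw, hv'w⟩ := exists_ne_zero_inner_nonneg hdim v v'
  have hvw' : GromovRel 0 (ray v) (ray w) := gromovRel_ray_ray hv hw hvw
  have hwv' : GromovRel 0 (ray w) (ray v') :=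
    gromovRel_ray_ray hw hv' (real_inner_comm v' w ▸ hv'w)
  exact (((Relation.TransGen.single hxv).tail hvw').tail hwv').tail hyv'.symm

/-- In a real Hilbert space of dimension at least 2, any two Gromov sequences (with
basepoint `0`) are equivalent under the transitive closure of the relation `E`:
the Gromov boundary is a singleton. -/
theorem stmt_5 {X : Type*} [NormedAddCommGroup X] [InnerProductSpace ℝ X]
    [CompleteSpace X] (hdim : 2 ≤ Module.rank ℝ X)
    (x y : ℕ → X) (hx : IsGromovSeq (0 : X) x) (hy : IsGromovSeq (0 : X) y) :
    Relation.TransGen (GromovRel (0 : X)) x y :=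
  stmt_5_general hdim x y hx hy
end

section
/- Let X be a real inner product space, let w be a unit vector, and let x = (x_n), z = (z_n) be sequences with z_n = -n·w and with every x_n nonzero satisfying ∠(x_n, z_1) ≤ 2π/3 for all n. If ‖x_n‖ → ∞, then (x_m | z_n)_0 → ∞ as m, n → ∞. -/
open Filter InnerProductGeometry

/-- Key inequality: if `⟪u,v⟫ ≥ -‖u‖‖v‖/2`, then the Gromov product at 0 is at least
`min ‖u‖ ‖v‖ / 8`. -/
lemma stmt_8_key {X : Type*} [NormedAddCommGroup X] [InnerProductSpace ℝ X]
    (u v : X) (h : -(‖u‖ * ‖v‖) / 2 ≤ (inner ℝ u v : ℝ)) :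
    min ‖u‖ ‖v‖ / 8 ≤ (‖u‖ + ‖v‖ - ‖u - v‖) / 2 := by
  set a := ‖u‖ with ha
  set b := ‖v‖ with hb
  set c := ‖u - v‖ with hc
  have ha0 : 0 ≤ a := norm_nonneg _
  have hb0 : 0 ≤ b := norm_nonneg _
  have hc0 : 0 ≤ c := norm_nonneg _
  have hsq : c ^ 2 = a ^ 2 + b ^ 2 - 2 * (inner ℝ u v : ℝ) := by
    rw [hc, ha, hb, @norm_sub_sq_real]; ring
  have hcle : c ^ 2 ≤ a ^ 2 + b ^ 2 + a * b := by
    rw [hsq]; nlinarith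
  rcases le_total a b with hab | hab
  · rw [min_eq_left hab]
    have : c ≤ b + 3 * a / 4 := by nlinarith
    linarith
  · rw [min_eq_right hab]
    have : c ≤ a + 3 * b / 4 := by nlinarith
    linarith

/-- Let `w` be a unit vector in a real inner product space, `z n = -n·w`, and `(x n)` a
sequence of nonzero vectors with `∠(x n, -w) ≤ 2π/3` and `‖x n‖ → ∞`. Then
`(x_m | z_n)_0 → ∞` as `m, n → ∞`, where `(u|v)_0 = (‖u‖ + ‖v‖ - ‖u - v‖)/2`. -/
theorem stmt_8 {X : Type*} [NormedAddCommGroup X] [InnerProductSpace ℝ X]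
    (w : X) (hw : ‖w‖ = 1) (x : ℕ → X) (hx0 : ∀ n, x n ≠ 0)
    (hangle : ∀ n, InnerProductGeometry.angle (x n) (-w) ≤ 2 * Real.pi / 3)
    (hnorm : Tendsto (fun n => ‖x n‖) atTop atTop) :
    Tendsto
      (fun p : ℕ × ℕ =>
        (‖x p.1‖ + ‖-(p.2 : ℝ) • w‖ - ‖x p.1 - -(p.2 : ℝ) • w‖) / 2)
      atTop atTop := by
  -- inner product lower bound against `-w`
  have hcos : ∀ m, -(1 / 2 : ℝ) ≤ Real.cos (angle (x m) (-w)) := by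
    intro m
    have h23 : Real.cos (2 * Real.pi / 3) = -(1 / 2 : ℝ) := by
      have : (2 : ℝ) * Real.pi / 3 = Real.pi - Real.pi / 3 := by ring
      rw [this, Real.cos_pi_sub, Real.cos_pi_div_three]
    calc -(1 / 2 : ℝ) = Real.cos (2 * Real.pi / 3) := h23.symm
      _ ≤ Real.cos (angle (x m) (-w)) := by
          apply Real.cos_le_cos_of_nonneg_of_le_pi (angle_nonneg _ _)
          · have := Real.pi_pos; linarith
          · exact hangle m
  have hinner : ∀ m, -(‖x m‖) / 2 ≤ (inner ℝ (x m) (-w) : ℝ) := by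
    intro m
    have := InnerProductGeometry.cos_angle_mul_norm_mul_norm (x m) (-w)
    rw [norm_neg, hw, mul_one] at this
    rw [← this]
    have hm0 : (0 : ℝ) ≤ ‖x m‖ := norm_nonneg _
    have := mul_le_mul_of_nonneg_right (hcos m) hm0
    linarith
  have hinner2 : ∀ m n : ℕ, -(‖x m‖ * ‖-(n : ℝ) • w‖) / 2
      ≤ (inner ℝ (x m) (-(n : ℝ) • w) : ℝ) := by
    intro m n
    have hnw : ‖-(n : ℝ) • w‖ = (n : ℝ) := by
      rw [norm_smul, hw, mul_one, Real.norm_eq_abs, abs_neg, Nat.abs_cast]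
    rw [hnw]
    have : (inner ℝ (x m) (-(n : ℝ) • w) : ℝ) = (n : ℝ) * (inner ℝ (x m) (-w) : ℝ) := by
      rw [show -(n : ℝ) • w = (n : ℝ) • (-w) by simp [smul_neg], real_inner_smul_right]
    rw [this]
    have hn0 : (0 : ℝ) ≤ (n : ℝ) := Nat.cast_nonneg n
    have := mul_le_mul_of_nonneg_left (hinner m) hn0
    nlinarith
  -- bound below by min / 8 and conclude
  rw [tendsto_atTop]
  intro C
  rw [← Filter.prod_atTop_atTop_eq]
  have hA : ∀ᶠ m : ℕ in atTop, 8 * C ≤ ‖x m‖ := hnorm.eventually_ge_atTop _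
  have hB : ∀ᶠ n : ℕ in atTop, 8 * C ≤ (n : ℝ) :=
    (tendsto_natCast_atTop_atTop (R := ℝ)).eventually_ge_atTop _
  filter_upwards [hA.prod_inl atTop, hB.prod_inr atTop] with p h1 h2
  have hkey := stmt_8_key (x p.1) (-(p.2 : ℝ) • w) (hinner2 p.1 p.2)
  have hnw : ‖-(p.2 : ℝ) • w‖ = (p.2 : ℝ) := by
    rw [norm_smul, hw, mul_one, Real.norm_eq_abs, abs_neg, Nat.abs_cast]
  have hmin : 8 * C ≤ min ‖x p.1‖ ‖-(p.2 : ℝ) • w‖ := by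
    rw [hnw]; exact le_min h1 h2
  linarith
end
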